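/- arXiv:2102.08714 — 7 statements merged into one kernel-verified Lean document; each statement's English description precedes it below -/
import Mathlib

section
/- Let g satisfy Assumption A, let Ω ⊆ ℝ² be open, and let u ∈ C²(Ω) with ∇u ≠ 0 on Ω be a solution of div( (g'(|∇u|)/|∇u|) ∇u ) = 0 on Ω. Then on Ω the 1-form β = [Ξ(|∇u|)(1+u_x²) + ϑ(|∇u|)] dx + Ξ(|∇u|) u_x u_y dy is closed, i.e. ∂_y [ Ξ(|∇u|)(1+u_x²) + ϑ(|∇u|) ] = ∂_x [ Ξ(|∇u|) u_x u_y ]. -/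
open Real Filter Set

/-- Partial derivative in the `x`-direction. -/
noncomputable def pdx (f : ℝ × ℝ → ℝ) (p : ℝ × ℝ) : ℝ := fderiv ℝ f p (1, 0)

/-- Partial derivative in the `y`-direction. -/
noncomputable def pdy (f : ℝ × ℝ → ℝ) (p : ℝ × ℝ) : ℝ := fderiv ℝ f p (0, 1)

/-- `|∇u|`, the Euclidean norm of the gradient. -/
noncomputable def gnorm (u : ℝ × ℝ → ℝ) (p : ℝ × ℝ) : ℝ :=
  Real.sqrt ((pdx u p) ^ 2 + (pdy u p) ^ 2)

/-- `Ξ(t) = g'(t)/t`. -/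
noncomputable def Xi (g : ℝ → ℝ) (t : ℝ) : ℝ := deriv g t / t

/-- `ϑ(t) = g(t) - t g'(t) - Ξ(t)`. -/
noncomputable def theta (g : ℝ → ℝ) (t : ℝ) : ℝ := g t - t * deriv g t - Xi g t

/-- Assumption A: `g` is `C²` on `[0,∞)`, `g'(0) = 0`, `g'' > 0` on `(0,∞)`,
and `g` has linear growth. -/
def AssumptionA (g : ℝ → ℝ) : Prop :=
  ContDiffOn ℝ 2 g (Set.Ici 0) ∧
  derivWithin g (Set.Ici 0) 0 = 0 ∧
  (∀ t : ℝ, 0 < t → 0 < deriv (deriv g) t) ∧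
  ∃ a A b B : ℝ, 0 < a ∧ 0 < A ∧ 0 ≤ b ∧ 0 ≤ B ∧
    ∀ t : ℝ, 0 ≤ t → a * t - b ≤ g t ∧ g t ≤ A * t + B

/-- Condition (M): `g(t) - t g'(t) → 0` as `t → ∞`. -/
def CondM (g : ℝ → ℝ) : Prop :=
  Filter.Tendsto (fun t => g t - t * deriv g t) Filter.atTop (nhds 0)

/-- the 1-form `β = [Ξ(|∇u|)(1+u_x²)+ϑ(|∇u|)] dx + Ξ(|∇u|) u_x u_y dy`
is closed for solutions of the `μ`-surface equation. -/
theorem beta_closed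
    (g : ℝ → ℝ) (hA : AssumptionA g)
    (Ω : Set (ℝ × ℝ)) (hΩ : IsOpen Ω)
    (u : ℝ × ℝ → ℝ) (hu : ContDiffOn ℝ 2 u Ω)
    (hne : ∀ p ∈ Ω, (pdx u p, pdy u p) ≠ (0, 0))
    (hsol : ∀ p ∈ Ω,
      pdx (fun q => Xi g (gnorm u q) * pdx u q) p
        + pdy (fun q => Xi g (gnorm u q) * pdy u q) p = 0) :
    ∀ p ∈ Ω,
      pdy (fun q => Xi g (gnorm u q) * (1 + (pdx u q) ^ 2) + theta g (gnorm u q)) p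
        = pdx (fun q => Xi g (gnorm u q) * pdx u q * pdy u q) p := by
  intro z hz
  have hmem : Ω ∈ nhds z := hΩ.mem_nhds hz
  have hu2 : ContDiffAt ℝ 2 u z := hu.contDiffAt hmem
  -- first derivative facts
  have hfd1 : ContDiffAt ℝ 1 (fun x => fderiv ℝ u x) z :=
    hu2.fderiv_right (by norm_num)
  have hD : HasFDerivAt (fun x => fderiv ℝ u x) (fderiv ℝ (fderiv ℝ u) z) z :=
    (hfd1.differentiableAt one_ne_zero).hasFDerivAt
  set D := fderiv ℝ (fderiv ℝ u) z with hDdef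
  have hP : HasFDerivAt (pdx u)
      ((ContinuousLinearMap.apply ℝ ℝ ((1:ℝ),(0:ℝ))).comp D) z :=
    (ContinuousLinearMap.apply ℝ ℝ ((1:ℝ),(0:ℝ))).hasFDerivAt.comp z hD
  have hQ : HasFDerivAt (pdy u)
      ((ContinuousLinearMap.apply ℝ ℝ ((0:ℝ),(1:ℝ))).comp D) z :=
    (ContinuousLinearMap.apply ℝ ℝ ((0:ℝ),(1:ℝ))).hasFDerivAt.comp z hD
  set A := (ContinuousLinearMap.apply ℝ ℝ ((1:ℝ),(0:ℝ))).comp D with hAdef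
  set B := (ContinuousLinearMap.apply ℝ ℝ ((0:ℝ),(1:ℝ))).comp D with hBdef
  set p0 := pdx u z with hp0
  set q0 := pdy u z with hq0
  -- norm of gradient positive
  have hs0 : 0 < p0 ^ 2 + q0 ^ 2 := by
    have h : ¬(p0 = 0 ∧ q0 = 0) := by
      intro hc
      exact hne z hz (Prod.ext hc.1 hc.2)
    rcases not_and_or.mp h with h | h
    · positivity
    · positivity
  set t0 := gnorm u z with ht0def
  have ht0 : 0 < t0 := Real.sqrt_pos.2 hs0
  have ht0ne : t0 ≠ 0 := ne_of_gt ht0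
  have ht0sq : t0 ^ 2 = p0 ^ 2 + q0 ^ 2 := Real.sq_sqrt hs0.le
  -- derivative of gnorm
  have hP2 : HasFDerivAt (fun q => (pdx u q) ^ 2) ((2 * p0) • A) z := by
    have h := hP.mul hP
    have e : (fun q => (pdx u q) ^ 2) = fun q => pdx u q * pdx u q := by
      funext q; ring
    rw [e]
    exact h.congr_fderiv (by rw [hp0]; module)
  have hQ2 : HasFDerivAt (fun q => (pdy u q) ^ 2) ((2 * q0) • B) z := by
    have h := hQ.mul hQ
    have e : (fun q => (pdy u q) ^ 2) = fun q => pdy u q * pdy u q := by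
      funext q; ring
    rw [e]
    exact h.congr_fderiv (by rw [hq0]; module)
  have hs : HasFDerivAt (fun q => (pdx u q) ^ 2 + (pdy u q) ^ 2)
      (((2 * p0) • A) + ((2 * q0) • B)) z := hP2.add hQ2
  have ht : HasFDerivAt (gnorm u)
      ((1 / (2 * t0)) • (((2 * p0) • A) + ((2 * q0) • B))) z := by
    have := (Real.hasDerivAt_sqrt hs0.ne').comp_hasFDerivAt z hs
    simp [gnorm, ht0def, Function.comp_def, hp0, hq0] at this ⊢
    exact this
  set T := ((1 / (2 * t0)) • (((2 * p0) • A) + ((2 * q0) • B))) with hTdef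
  -- g facts at t0
  have hIci : Set.Ici (0:ℝ) ∈ nhds t0 :=
    Filter.mem_of_superset (isOpen_Ioi.mem_nhds ht0) Set.Ioi_subset_Ici_self
  have hg2 : ContDiffAt ℝ 2 g t0 := hA.1.contDiffAt hIci
  have hg' : HasDerivAt g (deriv g t0) t0 :=
    (hg2.differentiableAt (by norm_num)).hasDerivAt
  have hgIoi : ContDiffOn ℝ 1 (deriv g) (Set.Ioi 0) :=
    (hA.1.mono Set.Ioi_subset_Ici_self).deriv_of_isOpen isOpen_Ioi (by norm_num)
  have hg'' : HasDerivAt (deriv g) (deriv (deriv g) t0) t0 := by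
    have : ContDiffAt ℝ 1 (deriv g) t0 :=
      hgIoi.contDiffAt (isOpen_Ioi.mem_nhds ht0)
    exact (this.differentiableAt one_ne_zero).hasDerivAt
  set G1 := deriv g t0 with hG1
  set G2 := deriv (deriv g) t0 with hG2
  have hXi : HasDerivAt (Xi g) ((G2 * t0 - G1 * 1) / t0 ^ 2) t0 := by
    have h := hg''.div (hasDerivAt_id t0) ht0ne
    simp [Xi, hG1, Pi.div_def] at h ⊢
    exact h
  set X' := (G2 * t0 - G1 * 1) / t0 ^ 2 with hX'
  have hXit : HasFDerivAt (fun q => Xi g (gnorm u q)) (X' • T) z :=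
    hXi.comp_hasFDerivAt_of_eq z ht ht0def
  have hgt : HasFDerivAt (fun q => g (gnorm u q)) (G1 • T) z :=
    hg'.comp_hasFDerivAt_of_eq z ht ht0def
  have hg't : HasFDerivAt (fun q => deriv g (gnorm u q)) (G2 • T) z :=
    hg''.comp_hasFDerivAt_of_eq z ht ht0def
  -- the PDE at z
  have hE1 : HasFDerivAt (fun q => Xi g (gnorm u q) * pdx u q)
      (Xi g t0 • A + p0 • (X' • T)) z := hXit.mul hP
  have hE2 : HasFDerivAt (fun q => Xi g (gnorm u q) * pdy u q)
      (Xi g t0 • B + q0 • (X' • T)) z := hXit.mul hQ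
  have hpde : (Xi g t0 • A + p0 • (X' • T)) ((1:ℝ),(0:ℝ))
      + (Xi g t0 • B + q0 • (X' • T)) ((0:ℝ),(1:ℝ)) = 0 := by
    have := hsol z hz
    rw [pdx, pdy, hE1.fderiv, hE2.fderiv] at this
    exact this
  -- target derivatives
  have hF2 : HasFDerivAt (fun q => Xi g (gnorm u q) * pdx u q * pdy u q)
      ((Xi g t0 * p0) • B + q0 • (Xi g t0 • A + p0 • (X' • T))) z :=
    (hXit.mul hP).mul hQ
  have hfun : (fun q => Xi g (gnorm u q) * (1 + (pdx u q) ^ 2) + theta g (gnorm u q))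
      = (fun q => Xi g (gnorm u q) * (pdx u q) ^ 2
          + (g (gnorm u q) - gnorm u q * deriv g (gnorm u q))) := by
    funext q; simp [theta]; ring
  have hF1 : HasFDerivAt
      (fun q => Xi g (gnorm u q) * (1 + (pdx u q) ^ 2) + theta g (gnorm u q))
      ((Xi g t0 • ((2 * p0) • A) + (p0 ^ 2) • (X' • T))
        + (G1 • T - (t0 • (G2 • T) + G1 • T))) z := by
    rw [hfun]
    exact (hXit.mul hP2).add (hgt.sub (ht.mul hg't))
  -- symmetry of second derivatives
  have hsymm : A ((0:ℝ),(1:ℝ)) = B ((1:ℝ),(0:ℝ)) := by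
    have h := hu2.isSymmSndFDerivAt (by norm_num) ((0:ℝ),(1:ℝ)) ((1:ℝ),(0:ℝ))
    simpa [hAdef, hBdef, hDdef] using h
  -- put everything together
  rw [pdy, pdx, hF1.fderiv, hF2.fderiv]
  have hXival : Xi g t0 = G1 / t0 := rfl
  have hX2 : X' * t0 ^ 2 = G2 * t0 - G1 := by
    rw [hX']
    field_simp
  simp only [ContinuousLinearMap.add_apply, ContinuousLinearMap.smul_apply,
    ContinuousLinearMap.coe_sub', Pi.sub_apply, smul_eq_mul, hTdef] at hpde ⊢
  rw [hXival] at hpde ⊢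
  rw [hsymm] at hpde ⊢
  linear_combination (-q0) * hpde
    + ((p0 * B ((1:ℝ),(0:ℝ)) + q0 * B ((0:ℝ),(1:ℝ))) / t0) * hX2
    - (X' * (p0 * B ((1:ℝ),(0:ℝ)) + q0 * B ((0:ℝ),(1:ℝ))) / t0) * ht0sq
end

section
/- Let g satisfy Assumption A, let Ω ⊆ ℝ² be open, and let u ∈ C²(Ω) with ∇u ≠ 0 on Ω be a solution of div( (g'(|∇u|)/|∇u|) ∇u ) = 0 on Ω. Then on Ω the 1-form α = −Ξ(|∇u|) u_x u_y dx − [Ξ(|∇u|)(1+u_y²) + ϑ(|∇u|)] dy is closed, i.e. ∂_y [ Ξ(|∇u|) u_x u_y ] = ∂_x [ Ξ(|∇u|)(1+u_y²) + ϑ(|∇u|) ]. -/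
open Real Filter Set

set_option maxHeartbeats 2000000 in
/-- the 1-form `α = -Ξ(|∇u|) u_x u_y dx - [Ξ(|∇u|)(1+u_y²)+ϑ(|∇u|)] dy`
is closed for solutions of the `μ`-surface equation. -/
theorem alpha_closed
    (g : ℝ → ℝ) (hA : AssumptionA g)
    (Ω : Set (ℝ × ℝ)) (hΩ : IsOpen Ω)
    (u : ℝ × ℝ → ℝ) (hu : ContDiffOn ℝ 2 u Ω)
    (hne : ∀ p ∈ Ω, (pdx u p, pdy u p) ≠ (0, 0))
    (hsol : ∀ p ∈ Ω,
      pdx (fun q => Xi g (gnorm u q) * pdx u q) p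
        + pdy (fun q => Xi g (gnorm u q) * pdy u q) p = 0) :
    ∀ p ∈ Ω,
      pdy (fun q => Xi g (gnorm u q) * pdx u q * pdy u q) p
        = pdx (fun q => Xi g (gnorm u q) * (1 + (pdy u q) ^ 2) + theta g (gnorm u q)) p := by
  intro p hp
  have hsol' := hsol p hp
  have hne' := hne p hp
  clear hsol hne
  simp only [pdx, pdy, gnorm] at hsol' hne' ⊢
  -- C² data for u at p
  have hu2 : ContDiffAt ℝ 2 u p := hu.contDiffAt (hΩ.mem_nhds hp)
  have hfd1 : ContDiffAt ℝ 1 (fderiv ℝ u) p := hu2.fderiv_right (by norm_num)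
  set D2 := fderiv ℝ (fderiv ℝ u) p with hD2def
  have hD2 : HasFDerivAt (fderiv ℝ u) D2 p := (hfd1.differentiableAt one_ne_zero).hasFDerivAt
  have hsymm := hu2.isSymmSndFDerivAt (by simp)
  set P' := (ContinuousLinearMap.apply ℝ ℝ ((1:ℝ),(0:ℝ))).comp D2 with hP'def
  set Q' := (ContinuousLinearMap.apply ℝ ℝ ((0:ℝ),(1:ℝ))).comp D2 with hQ'def
  have hP : HasFDerivAt (fun q => fderiv ℝ u q ((1:ℝ),(0:ℝ))) P' p :=
    (ContinuousLinearMap.apply ℝ ℝ ((1:ℝ),(0:ℝ))).hasFDerivAt.comp p hD2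
  have hQ : HasFDerivAt (fun q => fderiv ℝ u q ((0:ℝ),(1:ℝ))) Q' p :=
    (ContinuousLinearMap.apply ℝ ℝ ((0:ℝ),(1:ℝ))).hasFDerivAt.comp p hD2
  set Pp := fderiv ℝ u p ((1:ℝ),(0:ℝ)) with hPpdef
  set Qp := fderiv ℝ u p ((0:ℝ),(1:ℝ)) with hQpdef
  have hyx : D2 ((0:ℝ),(1:ℝ)) ((1:ℝ),(0:ℝ)) = D2 ((1:ℝ),(0:ℝ)) ((0:ℝ),(1:ℝ)) := hsymm _ _
  -- positivity of |∇u|²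
  have hS : 0 < Pp ^ 2 + Qp ^ 2 := by
    rcases not_and_or.1 (fun h => hne' (Prod.ext_iff.2 ⟨h.1, h.2⟩)) with h | h
    · positivity
    · positivity
  set T := Real.sqrt (Pp ^ 2 + Qp ^ 2) with hTdef
  have hT0 : 0 < T := Real.sqrt_pos.mpr hS
  have hT2 : T ^ 2 = Pp ^ 2 + Qp ^ 2 := Real.sq_sqrt hS.le
  -- g data at T
  set gp := deriv g T with hgpdef
  set gpp := deriv (deriv g) T with hgppdef
  have hgC : ContDiffAt ℝ 2 g T := hA.1.contDiffAt (Ici_mem_nhds hT0)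
  have hg' : HasDerivAt g gp T := (hgC.differentiableAt two_ne_zero).hasDerivAt
  have hdgC : ContDiffAt ℝ 1 (deriv g) T :=
    ((hA.1.mono (Ioi_subset_Ici le_rfl)).deriv_of_isOpen isOpen_Ioi (by norm_num)).contDiffAt
      (isOpen_Ioi.mem_nhds hT0)
  have hdg : HasDerivAt (deriv g) gpp T := (hdgC.differentiableAt one_ne_zero).hasDerivAt
  set Ξd := (gpp * T - gp * 1) / T ^ 2 with hΞddef
  have hXi : HasDerivAt (Xi g) Ξd T := hdg.div (hasDerivAt_id T) hT0.ne'
  have hth : HasDerivAt (theta g) (gp - (1 * gp + T * gpp) - Ξd) T :=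
    (hg'.sub ((hasDerivAt_id T).mul hdg)).sub hXi
  have hXval : Xi g T = gp / T := by rw [Xi]
  -- |∇u|² and |∇u| as functions of q
  set s' := (Pp • P' + Pp • P') + (Qp • Q' + Qp • Q') with hs'def
  have hs : HasFDerivAt
      (fun q => fderiv ℝ u q ((1:ℝ),(0:ℝ)) ^ 2 + fderiv ℝ u q ((0:ℝ),(1:ℝ)) ^ 2) s' p := by
    have := (hP.mul hP).add (hQ.mul hQ)
    have e : (fun q => fderiv ℝ u q ((1:ℝ),(0:ℝ)) ^ 2 + fderiv ℝ u q ((0:ℝ),(1:ℝ)) ^ 2)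
        = (fun q => fderiv ℝ u q ((1:ℝ),(0:ℝ))) * (fun q => fderiv ℝ u q ((1:ℝ),(0:ℝ))) + (fun q => fderiv ℝ u q ((0:ℝ),(1:ℝ))) * (fun q => fderiv ℝ u q ((0:ℝ),(1:ℝ))) := by
      funext q; simp [pow_two]
    rw [e]; exact this
  set τ' := (1 / (2 * T)) • s' with hτ'def
  have hτ : HasFDerivAt
      (fun q => Real.sqrt (fderiv ℝ u q ((1:ℝ),(0:ℝ)) ^ 2 + fderiv ℝ u q ((0:ℝ),(1:ℝ)) ^ 2))
      τ' p := (Real.hasDerivAt_sqrt hS.ne').comp_hasFDerivAt p hs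
  -- Ξ(|∇u|) and ϑ(|∇u|) as functions of q
  have hXc : HasFDerivAt
      (fun q => Xi g (Real.sqrt (fderiv ℝ u q ((1:ℝ),(0:ℝ)) ^ 2
        + fderiv ℝ u q ((0:ℝ),(1:ℝ)) ^ 2)))
      (Ξd • τ') p := hXi.comp_hasFDerivAt (f := fun q => Real.sqrt (fderiv ℝ u q ((1:ℝ),(0:ℝ)) ^ 2 + fderiv ℝ u q ((0:ℝ),(1:ℝ)) ^ 2)) p hτ
  have hthc : HasFDerivAt
      (fun q => theta g (Real.sqrt (fderiv ℝ u q ((1:ℝ),(0:ℝ)) ^ 2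
        + fderiv ℝ u q ((0:ℝ),(1:ℝ)) ^ 2)))
      ((gp - (1 * gp + T * gpp) - Ξd) • τ') p := hth.comp_hasFDerivAt (f := fun q => Real.sqrt (fderiv ℝ u q ((1:ℝ),(0:ℝ)) ^ 2 + fderiv ℝ u q ((0:ℝ),(1:ℝ)) ^ 2)) p hτ
  -- the composite functions appearing in the statement
  have hF1 : HasFDerivAt
      (fun q => Xi g (Real.sqrt (fderiv ℝ u q ((1:ℝ),(0:ℝ)) ^ 2
          + fderiv ℝ u q ((0:ℝ),(1:ℝ)) ^ 2))
        * fderiv ℝ u q ((1:ℝ),(0:ℝ)) * fderiv ℝ u q ((0:ℝ),(1:ℝ)))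
      ((Xi g T * Pp) • Q' + Qp • (Xi g T • P' + Pp • (Ξd • τ'))) p :=
    (hXc.mul hP).mul hQ
  have hQsq : HasFDerivAt (fun q => (1:ℝ) + fderiv ℝ u q ((0:ℝ),(1:ℝ)) ^ 2)
      ((1:ℝ) • (Qp • Q' + Qp • Q') + (1 + Qp ^ 2) • (0 : ℝ × ℝ →L[ℝ] ℝ)) p := by
    have := (hasFDerivAt_const (1:ℝ) p).add (hQ.mul hQ)
    simp only [zero_add, one_smul, smul_zero, add_zero]
    have e : (fun q => (1:ℝ) + fderiv ℝ u q ((0:ℝ),(1:ℝ)) ^ 2)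
        = (fun _ => (1:ℝ)) + (fun q => fderiv ℝ u q ((0:ℝ),(1:ℝ))) * (fun q => fderiv ℝ u q ((0:ℝ),(1:ℝ))) := by
      funext q; simp [pow_two]
    rw [e, ← zero_add (Qp • Q' + Qp • Q')]; exact this
  have hF2 : HasFDerivAt
      (fun q => Xi g (Real.sqrt (fderiv ℝ u q ((1:ℝ),(0:ℝ)) ^ 2
          + fderiv ℝ u q ((0:ℝ),(1:ℝ)) ^ 2))
        * (1 + fderiv ℝ u q ((0:ℝ),(1:ℝ)) ^ 2)
        + theta g (Real.sqrt (fderiv ℝ u q ((1:ℝ),(0:ℝ)) ^ 2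
          + fderiv ℝ u q ((0:ℝ),(1:ℝ)) ^ 2)))
      ((Xi g T • ((1:ℝ) • (Qp • Q' + Qp • Q') + (1 + Qp ^ 2) • (0 : ℝ × ℝ →L[ℝ] ℝ))
          + (1 + Qp ^ 2) • (Ξd • τ'))
        + (gp - (1 * gp + T * gpp) - Ξd) • τ') p :=
    (hXc.mul hQsq).add hthc
  have hG1 : HasFDerivAt
      (fun q => Xi g (Real.sqrt (fderiv ℝ u q ((1:ℝ),(0:ℝ)) ^ 2
          + fderiv ℝ u q ((0:ℝ),(1:ℝ)) ^ 2))
        * fderiv ℝ u q ((1:ℝ),(0:ℝ)))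
      (Xi g T • P' + Pp • (Ξd • τ')) p := hXc.mul hP
  have hG2 : HasFDerivAt
      (fun q => Xi g (Real.sqrt (fderiv ℝ u q ((1:ℝ),(0:ℝ)) ^ 2
          + fderiv ℝ u q ((0:ℝ),(1:ℝ)) ^ 2))
        * fderiv ℝ u q ((0:ℝ),(1:ℝ)))
      (Xi g T • Q' + Qp • (Ξd • τ')) p := hXc.mul hQ
  -- scalar evaluations
  set uxx := D2 ((1:ℝ),(0:ℝ)) ((1:ℝ),(0:ℝ)) with huxxdef
  set uxy := D2 ((1:ℝ),(0:ℝ)) ((0:ℝ),(1:ℝ)) with huxydef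
  set uyy := D2 ((0:ℝ),(1:ℝ)) ((0:ℝ),(1:ℝ)) with huyydef
  have hPDE : (gp / T) * uxx + Pp * (Ξd * ((1 / (2 * T)) * ((Pp * uxx + Pp * uxx) + (Qp * uxy + Qp * uxy))))
      + ((gp / T) * uyy + Qp * (Ξd * ((1 / (2 * T)) * ((Pp * uxy + Pp * uxy) + (Qp * uyy + Qp * uyy))))) = 0 := by
    rw [hG1.fderiv, hG2.fderiv] at hsol'
    simp only [ContinuousLinearMap.add_apply, ContinuousLinearMap.coe_smul', Pi.smul_apply,
      hτ'def, hs'def, ContinuousLinearMap.coe_comp', Function.comp_apply,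
      ContinuousLinearMap.apply_apply, smul_eq_mul, hP'def, hQ'def, hyx, hXval] at hsol'
    linear_combination hsol'
  have EL : fderiv ℝ
      (fun q => Xi g (Real.sqrt (fderiv ℝ u q ((1:ℝ),(0:ℝ)) ^ 2
          + fderiv ℝ u q ((0:ℝ),(1:ℝ)) ^ 2))
        * fderiv ℝ u q ((1:ℝ),(0:ℝ)) * fderiv ℝ u q ((0:ℝ),(1:ℝ))) p ((0:ℝ),(1:ℝ))
      = (gp / T) * Pp * uyy + Qp * ((gp / T) * uxy
          + Pp * (Ξd * ((1 / (2 * T)) * ((Pp * uxy + Pp * uxy) + (Qp * uyy + Qp * uyy))))) := by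
    rw [hF1.fderiv]
    simp only [ContinuousLinearMap.add_apply, ContinuousLinearMap.coe_smul', Pi.smul_apply,
      hτ'def, hs'def, ContinuousLinearMap.coe_comp', Function.comp_apply,
      ContinuousLinearMap.apply_apply, smul_eq_mul, hP'def, hQ'def, hyx, hXval]
    try ring
  have ER : fderiv ℝ
      (fun q => Xi g (Real.sqrt (fderiv ℝ u q ((1:ℝ),(0:ℝ)) ^ 2
          + fderiv ℝ u q ((0:ℝ),(1:ℝ)) ^ 2))
        * (1 + fderiv ℝ u q ((0:ℝ),(1:ℝ)) ^ 2)
        + theta g (Real.sqrt (fderiv ℝ u q ((1:ℝ),(0:ℝ)) ^ 2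
          + fderiv ℝ u q ((0:ℝ),(1:ℝ)) ^ 2))) p ((1:ℝ),(0:ℝ))
      = (gp / T) * (Qp * uxy + Qp * uxy)
        + (1 + Qp ^ 2) * (Ξd * ((1 / (2 * T)) * ((Pp * uxx + Pp * uxx) + (Qp * uxy + Qp * uxy))))
        + (gp - (1 * gp + T * gpp) - Ξd)
            * ((1 / (2 * T)) * ((Pp * uxx + Pp * uxx) + (Qp * uxy + Qp * uxy))) := by
    rw [hF2.fderiv]
    simp only [ContinuousLinearMap.add_apply, ContinuousLinearMap.coe_smul', Pi.smul_apply,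
      hτ'def, hs'def, ContinuousLinearMap.coe_comp', Function.comp_apply,
      ContinuousLinearMap.apply_apply, smul_eq_mul, hP'def, hQ'def, hyx, hXval,
      ContinuousLinearMap.zero_apply, mul_zero, add_zero]
    try ring
  -- clear denominators and finish with the algebraic identity
  have hT3 : T ≠ 0 := hT0.ne'
  have h2T : (2 * T ^ 3 : ℝ) ≠ 0 := by positivity
  have hPDE3 : (gpp * T - gp) * (Pp * uxx + Qp * uxy) * Pp + T ^ 2 * gp * uxx
      + (gpp * T - gp) * (Pp * uxy + Qp * uyy) * Qp + T ^ 2 * gp * uyy = 0 := by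
    have e : ((gp / T) * uxx
          + Pp * (Ξd * ((1 / (2 * T)) * ((Pp * uxx + Pp * uxx) + (Qp * uxy + Qp * uxy))))
        + ((gp / T) * uyy
          + Qp * (Ξd * ((1 / (2 * T)) * ((Pp * uxy + Pp * uxy) + (Qp * uyy + Qp * uyy))))))
          * (2 * T ^ 3)
        = 2 * T ^ 2 * ((gpp * T - gp) * (Pp * uxx + Qp * uxy) * Pp + T ^ 2 * gp * uxx
          + (gpp * T - gp) * (Pp * uxy + Qp * uyy) * Qp + T ^ 2 * gp * uyy) / T ^ 2 := by
      rw [hΞddef]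
      field_simp
      ring
    rw [hPDE, zero_mul] at e
    field_simp at e
    linear_combination (-1/2 : ℝ) * e
  rw [EL, ER]
  apply mul_right_cancel₀ h2T
  have eL : ((gp / T) * Pp * uyy + Qp * ((gp / T) * uxy
        + Pp * (Ξd * ((1 / (2 * T)) * ((Pp * uxy + Pp * uxy) + (Qp * uyy + Qp * uyy))))))
        * (2 * T ^ 3)
      = 2 * ((gpp * T - gp) * (Pp * uxy + Qp * uyy) * Pp * Qp + T ^ 2 * gp * uxy * Qp
        + T ^ 2 * gp * Pp * uyy) := by
    rw [hΞddef]
    field_simp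
    ring
  have eR : ((gp / T) * (Qp * uxy + Qp * uxy)
        + (1 + Qp ^ 2) * (Ξd * ((1 / (2 * T)) * ((Pp * uxx + Pp * uxx) + (Qp * uxy + Qp * uxy))))
        + (gp - (1 * gp + T * gpp) - Ξd)
            * ((1 / (2 * T)) * ((Pp * uxx + Pp * uxx) + (Qp * uxy + Qp * uxy))))
        * (2 * T ^ 3)
      = 2 * ((gpp * T - gp) * (Pp * uxx + Qp * uxy) * (1 + Qp ^ 2)
        + T ^ 2 * gp * (2 * Qp * uxy)
        + (-(T ^ 3 * gpp) - (gpp * T - gp)) * (Pp * uxx + Qp * uxy)) := by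
    rw [hΞddef]
    field_simp
    ring
  rw [eL, eR]
  linear_combination (2 * Pp) * hPDE3 + (2 * (gpp * T - gp) * (Pp * uxx + Qp * uxy)) * hT2
end

section
/- Let g satisfy Assumption A and condition (M). For p = (p₁,p₂) ∈ ℝ² with p ≠ 0 consider the symmetric 2×2 matrix M(p) with entries M₁₁ = Ξ(|p|)(1+p₁²) + ϑ(|p|), M₁₂ = M₂₁ = Ξ(|p|) p₁ p₂, M₂₂ = Ξ(|p|)(1+p₂²) + ϑ(|p|). Then for every η = (η₁,η₂) ∈ ℝ²: ηᵀ M(p) η ≥ ( g(|p|) − |p| g'(|p|) ) |η|², and in particular M(p) is positive definite. -/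
open Real Filter Set

/-- The Euclidean norm on `ℝ²`. -/
noncomputable def enorm2 (p : ℝ × ℝ) : ℝ := Real.sqrt (p.1 ^ 2 + p.2 ^ 2)

/-- Under Assumption A, `g' > 0` on `(0,∞)`. -/
lemma deriv_pos_of_assumptionA (g : ℝ → ℝ) (hA : AssumptionA g) :
    ∀ t : ℝ, 0 < t → 0 < deriv g t := by
  obtain ⟨hC, hd0, hgg, -⟩ := hA
  set φ := derivWithin g (Set.Ici 0) with hφ
  have hφeq : ∀ x : ℝ, 0 < x → φ x = deriv g x := fun x hx =>
    derivWithin_of_mem_nhds (Ici_mem_nhds hx)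
  have hφcont : ContinuousOn φ (Set.Ici 0) :=
    (hC.derivWithin (m := 1) (uniqueDiffOn_Ici 0) (by norm_num)).continuousOn
  have hmono : StrictMonoOn φ (Set.Ici 0) := by
    apply strictMonoOn_of_deriv_pos (convex_Ici 0) hφcont
    intro x hx
    rw [interior_Ici] at hx
    have heq : φ =ᶠ[nhds x] deriv g := by
      filter_upwards [Ioi_mem_nhds hx] with y hy using hφeq y hy
    rw [heq.deriv_eq]
    exact hgg x hx
  intro t ht
  have := hmono (Set.self_mem_Ici) (Set.mem_Ici.mpr ht.le) ht
  rwa [hd0, hφeq t ht] at this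

/-- Under Assumption A, `deriv g` is differentiable on `(0,∞)`. -/
lemma deriv_differentiableAt (g : ℝ → ℝ) (hC : ContDiffOn ℝ 2 g (Set.Ici 0)) :
    ∀ x : ℝ, 0 < x → DifferentiableAt ℝ (deriv g) x := by
  intro x hx
  have h1 : ContDiffOn ℝ 1 (deriv g) (Set.Ioi 0) :=
    (hC.mono Set.Ioi_subset_Ici_self).deriv_of_isOpen (m := 1) isOpen_Ioi (by norm_num)
  exact (h1.differentiableOn one_ne_zero).differentiableAt (Ioi_mem_nhds hx)

/-- Under Assumption A and condition (M), `g(t) - t g'(t) > 0` for `t > 0`. -/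
lemma h_pos_of_assumptionA (g : ℝ → ℝ) (hA : AssumptionA g) (hM : CondM g) :
    ∀ t : ℝ, 0 < t → 0 < g t - t * deriv g t := by
  obtain ⟨hC, hd0, hgg, -⟩ := hA
  intro t ht
  set h : ℝ → ℝ := fun x => g x - x * deriv g x with hh
  have hdiff : ∀ x : ℝ, 0 < x → DifferentiableAt ℝ h x := by
    intro x hx
    have hg : DifferentiableAt ℝ g x :=
      ((hC.differentiableOn (by norm_num)).differentiableAt (Ici_mem_nhds hx))
    exact hg.sub (differentiableAt_id.mul (deriv_differentiableAt g hC x hx))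
  have hanti : StrictAntiOn h (Set.Ici t) := by
    apply strictAntiOn_of_deriv_neg (convex_Ici t)
    · exact fun x hx => (hdiff x (lt_of_lt_of_le ht hx)).continuousAt.continuousWithinAt
    · intro x hx
      rw [interior_Ici] at hx
      have hx0 : 0 < x := ht.trans hx
      have hg : DifferentiableAt ℝ g x :=
        ((hC.differentiableOn (by norm_num)).differentiableAt (Ici_mem_nhds hx0))
      have h1 : HasDerivAt g (deriv g x) x := hg.hasDerivAt
      have h2 : HasDerivAt (deriv g) (deriv (deriv g) x) x :=
        (deriv_differentiableAt g hC x hx0).hasDerivAt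
      have h3 : HasDerivAt h (deriv g x - (1 * deriv g x + x * deriv (deriv g) x)) x :=
        h1.sub ((hasDerivAt_id x).mul h2)
      rw [h3.deriv]
      have := hgg x hx0
      nlinarith
  have hle : (0:ℝ) ≤ h (t + 1) := by
    apply le_of_tendsto hM
    filter_upwards [eventually_ge_atTop (t + 1)] with s hs
    rcases eq_or_lt_of_le hs with h' | h'
    · rw [h']
    · exact (hanti (by simp [le_add_of_nonneg_right]) (le_trans (by linarith) hs) h').le
  have hlt : h (t + 1) < h t :=
    hanti Set.self_mem_Ici (by simp [le_add_of_nonneg_right]) (by linarith)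
  exact lt_of_le_of_lt hle hlt

/-- the symmetric matrix `M(p)` with entries
`M₁₁ = Ξ(|p|)(1+p₁²)+ϑ(|p|)`, `M₁₂ = M₂₁ = Ξ(|p|)p₁p₂`, `M₂₂ = Ξ(|p|)(1+p₂²)+ϑ(|p|)`
satisfies `ηᵀ M(p) η ≥ (g(|p|) - |p| g'(|p|)) |η|²`; in particular it is positive
definite. -/
theorem quadratic_form_lower_bound
    (g : ℝ → ℝ) (hA : AssumptionA g) (hM : CondM g)
    (p : ℝ × ℝ) (hp : p ≠ 0) :
    (∀ η : ℝ × ℝ,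
      (Xi g (enorm2 p) * (1 + p.1 ^ 2) + theta g (enorm2 p)) * η.1 ^ 2
        + 2 * (Xi g (enorm2 p) * p.1 * p.2) * η.1 * η.2
        + (Xi g (enorm2 p) * (1 + p.2 ^ 2) + theta g (enorm2 p)) * η.2 ^ 2
      ≥ (g (enorm2 p) - enorm2 p * deriv g (enorm2 p)) * (η.1 ^ 2 + η.2 ^ 2)) ∧
    (∀ η : ℝ × ℝ, η ≠ 0 →
      0 < (Xi g (enorm2 p) * (1 + p.1 ^ 2) + theta g (enorm2 p)) * η.1 ^ 2
        + 2 * (Xi g (enorm2 p) * p.1 * p.2) * η.1 * η.2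
        + (Xi g (enorm2 p) * (1 + p.2 ^ 2) + theta g (enorm2 p)) * η.2 ^ 2) := by
  have hpp : 0 < p.1 ^ 2 + p.2 ^ 2 := by
    have : p.1 ≠ 0 ∨ p.2 ≠ 0 := by
      by_contra h; push_neg at h; exact hp (Prod.ext h.1 h.2)
    rcases this with h | h <;> positivity
  have ht : 0 < enorm2 p := Real.sqrt_pos.mpr hpp
  have hXi : 0 < Xi g (enorm2 p) :=
    div_pos (deriv_pos_of_assumptionA g hA (enorm2 p) ht) ht
  have hh : 0 < g (enorm2 p) - enorm2 p * deriv g (enorm2 p) :=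
    h_pos_of_assumptionA g hA hM (enorm2 p) ht
  have key : ∀ η : ℝ × ℝ,
      (Xi g (enorm2 p) * (1 + p.1 ^ 2) + theta g (enorm2 p)) * η.1 ^ 2
        + 2 * (Xi g (enorm2 p) * p.1 * p.2) * η.1 * η.2
        + (Xi g (enorm2 p) * (1 + p.2 ^ 2) + theta g (enorm2 p)) * η.2 ^ 2
      = (g (enorm2 p) - enorm2 p * deriv g (enorm2 p)) * (η.1 ^ 2 + η.2 ^ 2)
        + Xi g (enorm2 p) * (p.1 * η.1 + p.2 * η.2) ^ 2 := by
    intro η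
    simp only [theta]
    ring
  constructor
  · intro η
    rw [key η]
    nlinarith [mul_nonneg hXi.le (sq_nonneg (p.1 * η.1 + p.2 * η.2))]
  · intro η hη
    rw [key η]
    have hηη : 0 < η.1 ^ 2 + η.2 ^ 2 := by
      have : η.1 ≠ 0 ∨ η.2 ≠ 0 := by
        by_contra h; push_neg at h; exact hη (Prod.ext h.1 h.2)
      rcases this with h | h <;> positivity
    nlinarith [mul_nonneg hXi.le (sq_nonneg (p.1 * η.1 + p.2 * η.2))]
end

section
/- Let g satisfy Assumption A and condition (M). Then there exists a constant c > 0 such that for every p ∈ ℝ² with p ≠ 0: 1 + Ξ(|p|)(1 + |p|²) ≥ c (1 + |p|). In particular, with J(p) as in the determinant identity for the Jacobian of the map Λ, det J(p) ≥ c (1 + |p|) for all p ≠ 0. -/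
open Real Filter Set

open Topology

set_option maxHeartbeats 1600000 in
/-- there is `c > 0` with `1 + Ξ(|p|)(1+|p|²) ≥ c(1+|p|)` for all `p ≠ 0`;
in particular `det J(p) ≥ c (1+|p|)`. -/
theorem det_jacobian_linear_lower_bound
    (g : ℝ → ℝ) (hA : AssumptionA g) (hM : CondM g) :
    ∃ c : ℝ, 0 < c ∧
      ∀ p : ℝ × ℝ, p ≠ 0 →
        c * (1 + enorm2 p) ≤ 1 + Xi g (enorm2 p) * (1 + (enorm2 p) ^ 2) ∧
        c * (1 + enorm2 p) ≤ Matrix.det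
          !![1 + (Xi g (enorm2 p) * (1 + p.1 ^ 2) + theta g (enorm2 p)),
               Xi g (enorm2 p) * p.1 * p.2;
             Xi g (enorm2 p) * p.1 * p.2,
               1 + (Xi g (enorm2 p) * (1 + p.2 ^ 2) + theta g (enorm2 p))] := by
  obtain ⟨hC, h0, hpp, a, A, b, B, ha, hA', hb, hB, hgrow⟩ := hA
  have hIoi : (Ioi (0:ℝ)) ⊆ Ici 0 := Ioi_subset_Ici_self
  have hg2 : ContDiffOn ℝ 2 g (Ioi 0) := hC.mono hIoi
  have hg'c : ContDiffOn ℝ 1 (deriv g) (Ioi 0) := hg2.deriv_of_isOpen isOpen_Ioi (by norm_num)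
  have hmem : ∀ t : ℝ, 0 < t → Ioi (0:ℝ) ∈ 𝓝 t := fun t ht => isOpen_Ioi.mem_nhds ht
  have hdg : ∀ t : ℝ, 0 < t → HasDerivAt g (deriv g t) t := fun t ht =>
    ((hg2.contDiffAt (hmem t ht)).differentiableAt (by norm_num)).hasDerivAt
  have hdg' : ∀ t : ℝ, 0 < t → HasDerivAt (deriv g) (deriv (deriv g) t) t := fun t ht =>
    ((hg'c.contDiffAt (hmem t ht)).differentiableAt (by norm_num)).hasDerivAt
  -- deriv g strictly monotone on (0, ∞)
  have hmono : StrictMonoOn (deriv g) (Ioi 0) := by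
    apply strictMonoOn_of_deriv_pos (convex_Ioi 0) hg'c.continuousOn
    rw [interior_Ioi]
    exact fun x hx => hpp x hx
  -- h := g - t g' is antitone on (0, ∞)
  set h : ℝ → ℝ := fun t => g t - t * deriv g t with hhdef
  have hdh : ∀ t : ℝ, 0 < t → HasDerivAt h (-(t * deriv (deriv g) t)) t := by
    intro t ht
    have h2 : HasDerivAt (fun s => s * deriv g s) (1 * deriv g t + t * deriv (deriv g) t) t :=
      (hasDerivAt_id t).mul (hdg' t ht)
    have := (hdg t ht).sub h2
    exact this.congr_deriv (by ring)
  have hanti : AntitoneOn h (Ioi 0) := by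
    apply (strictAntiOn_of_deriv_neg (convex_Ioi 0) ?_ ?_).antitoneOn
    · exact fun x hx => ((hdh x hx).continuousAt).continuousWithinAt
    · rw [interior_Ioi]
      intro x hx
      rw [(hdh x hx).deriv]
      have := hpp x hx
      have hx' : (0:ℝ) < x := hx
      nlinarith
  -- h ≥ 0 on (0, ∞)
  have hpos : ∀ t : ℝ, 0 < t → 0 ≤ h t := by
    intro t ht
    have hM' : Tendsto h atTop (𝓝 0) := hM
    refine le_of_tendsto hM' ?_
    filter_upwards [eventually_ge_atTop t] with s hs
    exact hanti ht (lt_of_lt_of_le ht hs) hs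
  -- deriv g → 0 as t → 0+
  have htend : Tendsto (deriv g) (𝓝[>] (0:ℝ)) (𝓝 0) := by
    have hcontW : ContinuousOn (derivWithin g (Ici 0)) (Ici 0) :=
      hC.continuousOn_derivWithin (uniqueDiffOn_Ici 0) (by norm_num)
    have h1 : Tendsto (derivWithin g (Ici 0)) (𝓝[Ici 0] 0) (𝓝 0) := by
      have := (hcontW 0 self_mem_Ici).tendsto
      rwa [h0] at this
    have h2 : Tendsto (derivWithin g (Ici 0)) (𝓝[>] (0:ℝ)) (𝓝 0) :=
      h1.mono_left (nhdsWithin_mono _ hIoi)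
    refine h2.congr' ?_
    filter_upwards [self_mem_nhdsWithin] with s hs
    exact derivWithin_of_mem_nhds (Ici_mem_nhds hs)
  -- deriv g ≥ 0 on (0, ∞)
  have hge0 : ∀ t : ℝ, 0 < t → 0 ≤ deriv g t := by
    intro t ht
    refine le_of_tendsto htend ?_
    filter_upwards [Ioo_mem_nhdsGT_of_mem ⟨le_refl (0:ℝ), ht⟩] with s hs
    exact (hmono hs.1 ht hs.2).le
  have hgt0 : ∀ t : ℝ, 0 < t → 0 < deriv g t := fun t ht =>
    lt_of_le_of_lt (hge0 (t/2) (by linarith)) (hmono (by simp; linarith) ht (by linarith))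
  -- g is monotone on [0, ∞) with g 0 ≥ 0
  have hgmono : MonotoneOn g (Ici 0) := by
    apply monotoneOn_of_deriv_nonneg (convex_Ici 0) hC.continuousOn
    · rw [interior_Ici]
      exact fun x hx => (hdg x hx).differentiableAt.differentiableWithinAt
    · rw [interior_Ici]
      exact fun x hx => hge0 x hx
  have hg0 : 0 ≤ g 0 := by
    have t1 : Tendsto g (𝓝[>] (0:ℝ)) (𝓝 (g 0)) :=
      ((hC.continuousOn 0 self_mem_Ici).tendsto).mono_left (nhdsWithin_mono _ hIoi)
    have t2 : Tendsto (fun s : ℝ => s * deriv g s) (𝓝[>] (0:ℝ)) (𝓝 0) := by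
      have hid : Tendsto (fun s : ℝ => s) (𝓝[>] (0:ℝ)) (𝓝 0) :=
        tendsto_id.mono_left nhdsWithin_le_nhds
      simpa using hid.mul htend
    have hT : Tendsto h (𝓝[>] (0:ℝ)) (𝓝 (g 0)) := by simpa using t1.sub t2
    refine ge_of_tendsto hT ?_
    filter_upwards [self_mem_nhdsWithin] with s hs using hpos s hs
  have hgnn : ∀ t : ℝ, 0 ≤ t → 0 ≤ g t := fun t ht =>
    le_trans hg0 (hgmono self_mem_Ici ht ht)
  have hhapp : ∀ t : ℝ, h t = g t - t * deriv g t := fun t => by rw [hhdef]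
  clear_value h
  -- constants
  set m := deriv g 1 with hmdef
  have hm0 : 0 < m := hgt0 1 one_pos
  set T : ℝ := 2 * (b + 1) / a with hTdef
  have hT0 : 0 ≤ T := by positivity
  refine ⟨min (min (1/2) m) (min (a/2) (1/(1+T))), by positivity, ?_⟩
  set c := min (min (1/2) m) (min (a/2) (1/(1+T))) with hcdef
  have hc0 : 0 < c := by positivity
  have hc1 : c ≤ 1/2 := le_trans (min_le_left _ _) (min_le_left _ _)
  have hcm : c ≤ m := le_trans (min_le_left _ _) (min_le_right _ _)
  have hca : c ≤ a/2 := le_trans (min_le_right _ _) (min_le_left _ _)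
  have hcT : c ≤ 1/(1+T) := le_trans (min_le_right _ _) (min_le_right _ _)
  have haT : a * T = 2 * (b + 1) := by rw [hTdef]; field_simp
  clear_value c
  intro p hp
  set t := enorm2 p with htdef
  have hsq : t ^ 2 = p.1 ^ 2 + p.2 ^ 2 := by
    rw [htdef]
    exact Real.sq_sqrt (by positivity)
  have ht : 0 < t := by
    rw [htdef]
    apply Real.sqrt_pos.mpr
    have hne : p.1 ≠ 0 ∨ p.2 ≠ 0 := by
      by_contra hcon
      push_neg at hcon
      exact hp (Prod.ext hcon.1 hcon.2)
    rcases hne with h1 | h1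
    · have : 0 < p.1 ^ 2 := by positivity
      nlinarith [sq_nonneg p.2]
    · have : 0 < p.2 ^ 2 := by positivity
      nlinarith [sq_nonneg p.1]
  have hd0 : 0 ≤ deriv g t := hge0 t ht
  clear_value t
  constructor
  · -- first inequality
    rcases le_or_gt t 1 with hle | hlt
    · have hXi : 0 ≤ Xi g t * (1 + t ^ 2) := by
        apply mul_nonneg (div_nonneg hd0 ht.le)
        positivity
      nlinarith
    · have hdm : m ≤ deriv g t := (hmono.monotoneOn (by simp) (by simp [ht]) hlt.le)
      have hXi : m * t ≤ Xi g t * (1 + t ^ 2) := by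
        rw [Xi, div_mul_eq_mul_div, le_div_iff₀ ht]
        nlinarith
      nlinarith [mul_le_mul_of_nonneg_right hcm ht.le]
  · -- determinant inequality
    rw [Matrix.det_fin_two_of]
    have hXt : Xi g t * t ^ 2 = deriv g t * t := by
      rw [Xi]
      field_simp
    have hkey : (1 + (Xi g t * (1 + p.1 ^ 2) + theta g t)) * (1 + (Xi g t * (1 + p.2 ^ 2) + theta g t)) -
        Xi g t * p.1 * p.2 * (Xi g t * p.1 * p.2) = (1 + h t) * (1 + g t) := by
      have hth : theta g t = h t - Xi g t := by
        simp only [theta, hhdef]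
      rw [hth]
      have hht : h t = g t - t * deriv g t := hhapp t
      linear_combination (Xi g t ^ 2 - (1 + h t + Xi g t) * Xi g t) * hsq + (1 + h t) * hXt + (1 + h t) * hht
    rw [hkey]
    have hh0 : 0 ≤ h t := hpos t ht
    have hgl : a * t - b ≤ g t := (hgrow t ht.le).1
    have hgn : 0 ≤ g t := hgnn t ht.le
    have step1 : 1 + g t ≤ (1 + h t) * (1 + g t) := by nlinarith
    rcases le_or_gt t T with hle | hlt
    · have : c * (1 + t) ≤ 1 := by
        have h1T : (0:ℝ) < 1 + T := by linarith
        have h2 : c * (1 + T) ≤ 1 := by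
          have := (le_div_iff₀ h1T).mp hcT
          linarith
        nlinarith
      linarith
    · have hat : 2 * (b + 1) ≤ a * t := by
        nlinarith
      nlinarith [mul_le_mul_of_nonneg_right hca ht.le]
end

section
/- Let g satisfy Assumption A. For p = (p₁,p₂) ∈ ℝ², p ≠ 0, write G = g(|p|), Ξ = Ξ(|p|), and define the vectors X, Y ∈ ℝ³ by X = ( 1 + G − Ξ p₁², −Ξ p₁ p₂, p₁ [1 + G − Ξ |p|²] ) and Y = ( −Ξ p₁ p₂, 1 + G − Ξ p₂², p₂ [1 + G − Ξ |p|²] ). Then X · Y = p₁ p₂ Θ(|p|) and |X|² − |Y|² = (p₁² − p₂²) Θ(|p|), where Θ(t) = [ 1 − g(t) g'(t)/t ] + [ (g(t) − t g'(t)) − g'(t)/t ] · [ 2 + (g(t) − t g'(t)) ]. -/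
open Real Filter Set

/-- `Θ(t) = [1 - g(t)g'(t)/t] + [(g(t) - t g'(t)) - g'(t)/t]·[2 + (g(t) - t g'(t))]`. -/
noncomputable def Theta (g : ℝ → ℝ) (t : ℝ) : ℝ :=
  (1 - g t * deriv g t / t)
    + ((g t - t * deriv g t) - deriv g t / t) * (2 + (g t - t * deriv g t))

/-- the (almost) conformality relations `X · Y = p₁ p₂ Θ(|p|)` and
`|X|² - |Y|² = (p₁² - p₂²) Θ(|p|)` for the columns `X`, `Y` of the derivative of the
parametrization `χ` (up to the factor `det DΛ`). -/
theorem conformality_defect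
    (g : ℝ → ℝ) (hA : AssumptionA g)
    (p : ℝ × ℝ) (hp : p ≠ 0) :
    ((1 + g (enorm2 p) - Xi g (enorm2 p) * p.1 ^ 2) * (-(Xi g (enorm2 p) * p.1 * p.2))
      + (-(Xi g (enorm2 p) * p.1 * p.2)) * (1 + g (enorm2 p) - Xi g (enorm2 p) * p.2 ^ 2)
      + (p.1 * (1 + g (enorm2 p) - Xi g (enorm2 p) * (enorm2 p) ^ 2))
          * (p.2 * (1 + g (enorm2 p) - Xi g (enorm2 p) * (enorm2 p) ^ 2))
      = p.1 * p.2 * Theta g (enorm2 p)) ∧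
    (((1 + g (enorm2 p) - Xi g (enorm2 p) * p.1 ^ 2) ^ 2
        + (-(Xi g (enorm2 p) * p.1 * p.2)) ^ 2
        + (p.1 * (1 + g (enorm2 p) - Xi g (enorm2 p) * (enorm2 p) ^ 2)) ^ 2)
      - ((-(Xi g (enorm2 p) * p.1 * p.2)) ^ 2
        + (1 + g (enorm2 p) - Xi g (enorm2 p) * p.2 ^ 2) ^ 2
        + (p.2 * (1 + g (enorm2 p) - Xi g (enorm2 p) * (enorm2 p) ^ 2)) ^ 2)
      = (p.1 ^ 2 - p.2 ^ 2) * Theta g (enorm2 p)) := by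
  set t := enorm2 p with htdef
  have h12 : p.1 ≠ 0 ∨ p.2 ≠ 0 := by
    by_contra hc
    push_neg at hc
    exact hp (Prod.ext hc.1 hc.2)
  have hs : 0 < p.1 ^ 2 + p.2 ^ 2 := by
    rcases h12 with h1 | h2
    · nlinarith [sq_nonneg p.2, pow_pos (abs_pos.mpr h1) 2, sq_abs p.1]
    · nlinarith [sq_nonneg p.1, pow_pos (abs_pos.mpr h2) 2, sq_abs p.2]
  have ht : 0 < t := Real.sqrt_pos.mpr hs
  have ht2 : t ^ 2 = p.1 ^ 2 + p.2 ^ 2 := Real.sq_sqrt hs.le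
  set x := Xi g t with hx
  have hd : deriv g t = x * t := by
    rw [hx, Xi]; field_simp
  have e2 : t * (x * t) = x * (p.1 ^ 2 + p.2 ^ 2) := by
    rw [show t * (x * t) = x * t ^ 2 by ring, ht2]
  have e3 : g t * (x * t) / t = g t * x := by field_simp
  have e4 : x * t / t = x := mul_div_cancel_right₀ x ht.ne'
  rw [Theta, hd, e3, e4, e2, ht2]
  constructor <;> ring
end

section
/- Let g satisfy Assumption A with lim_{t→∞} g'(t) = 1, and suppose there are μ > 2 and constants c₁, c₂ > 0 such that for all t > 0: |g(t) − t g'(t)| ≤ c₁ t^{2−μ} and 0 ≤ 1 − g'(t) ≤ c₂ t^{1−μ}. Then there exist constants d₁, d₂ > 0 such that for all t ≥ 1: |Θ(t)| ≤ d₁ t^{2−μ} + d₂ t^{−1}, where Θ(t) = [ 1 − g(t) g'(t)/t ] + [ (g(t) − t g'(t)) − g'(t)/t ] · [ 2 + (g(t) − t g'(t)) ]. -/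
open Real Filter Set

/-- under the `μ`-elliptic decay assumptions, the conformality defect
satisfies `|Θ(t)| ≤ d₁ t^{2-μ} + d₂ t⁻¹` for `t ≥ 1`. -/
theorem Theta_decay
    (g : ℝ → ℝ) (hA : AssumptionA g)
    (hginf : Filter.Tendsto (fun t => deriv g t) Filter.atTop (nhds 1))
    (μ : ℝ) (hμ : 2 < μ) (c₁ c₂ : ℝ) (hc₁ : 0 < c₁) (hc₂ : 0 < c₂)
    (hdecay₁ : ∀ t : ℝ, 0 < t → |g t - t * deriv g t| ≤ c₁ * t ^ (2 - μ))
    (hdecay₂ : ∀ t : ℝ, 0 < t →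
      0 ≤ 1 - deriv g t ∧ 1 - deriv g t ≤ c₂ * t ^ (1 - μ)) :
    ∃ d₁ d₂ : ℝ, 0 < d₁ ∧ 0 < d₂ ∧
      ∀ t : ℝ, 1 ≤ t → |Theta g t| ≤ d₁ * t ^ (2 - μ) + d₂ * t⁻¹ := by
  refine ⟨2*c₂ + c₂^2 + c₁*(1+c₂) + c₁*(2+c₁), (1+c₂)*(2+c₁), by positivity, by positivity, ?_⟩
  intro t ht
  have ht0 : (0:ℝ) < t := lt_of_lt_of_le one_pos ht
  obtain ⟨he0, he1⟩ := hdecay₂ t ht0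
  have hh := hdecay₁ t ht0
  have hX0 : (0:ℝ) < t ^ (2-μ) := Real.rpow_pos_of_pos ht0 _
  have hY0 : (0:ℝ) < t ^ (1-μ) := Real.rpow_pos_of_pos ht0 _
  have hYX : t ^ (1-μ) ≤ t ^ (2-μ) := Real.rpow_le_rpow_of_exponent_le ht (by linarith)
  have hX1 : t ^ (2-μ) ≤ 1 := Real.rpow_le_one_of_one_le_of_nonpos ht (by linarith)
  have hY : t ^ (1-μ) = t ^ (2-μ) * t⁻¹ := by
    rw [← Real.rpow_neg_one t, ← Real.rpow_add ht0]; congr 1; ring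
  have hZ0 : (0:ℝ) < t⁻¹ := by positivity
  have hZ1 : t⁻¹ ≤ 1 := by
    rw [inv_le_one_iff₀]; right; exact ht
  have hThe : Theta g t = (1 - (deriv g t)^2) - (g t - t*deriv g t)*(deriv g t)/t
      + ((g t - t*deriv g t) - deriv g t/t)*(2+(g t - t*deriv g t)) := by
    unfold Theta; field_simp; ring
  rw [hThe]
  set G := deriv g t with hG
  set h := g t - t * G with hdef
  have hG1 : G ≤ 1 := by linarith
  have hY1 : t^(1-μ) ≤ 1 := hYX.trans hX1
  have hGc : c₂ * t^(1-μ) ≤ c₂ := by nlinarith [mul_le_of_le_one_right hc₂.le hY1]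
  have hGabs : |G| ≤ 1 + c₂ := by
    rw [abs_le]; constructor <;> nlinarith
  have t1 : |1 - G^2| ≤ c₂*(2+c₂) * t^(1-μ) := by
    have e1 : (1 - G^2) = (1-G)*(1+G) := by ring
    rw [e1, abs_mul, abs_of_nonneg he0]
    have e2 : |1+G| ≤ 2 + c₂ := by
      calc |1+G| ≤ |(1:ℝ)| + |G| := abs_add_le _ _
      _ ≤ 2 + c₂ := by rw [abs_one]; linarith
    calc (1-G) * |1+G| ≤ (c₂ * t^(1-μ)) * (2+c₂) := by
          apply mul_le_mul he1 e2 (abs_nonneg _) (by positivity)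
      _ = c₂*(2+c₂) * t^(1-μ) := by ring
  have t2 : |h*G/t| ≤ c₁*(1+c₂) * t^(1-μ) := by
    have e1 : h*G/t = h*G*t⁻¹ := by ring
    rw [e1, abs_mul, abs_mul, abs_of_pos hZ0]
    calc |h| * |G| * t⁻¹ ≤ (c₁ * t^(2-μ))*(1+c₂)*t⁻¹ := by
          apply mul_le_mul_of_nonneg_right _ (le_of_lt hZ0)
          exact mul_le_mul hh hGabs (abs_nonneg _) (by positivity)
      _ = c₁*(1+c₂) * (t^(2-μ)*t⁻¹) := by ring
      _ = c₁*(1+c₂) * t^(1-μ) := by rw [← hY]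
  have t3 : |h - G/t| ≤ c₁ * t^(2-μ) + (1+c₂) * t⁻¹ := by
    calc |h - G/t| ≤ |h| + |G/t| := abs_sub _ _
      _ ≤ c₁ * t^(2-μ) + (1+c₂) * t⁻¹ := by
        apply add_le_add hh
        rw [div_eq_mul_inv, abs_mul, abs_of_pos hZ0]
        exact mul_le_mul_of_nonneg_right hGabs (le_of_lt hZ0)
  have t4 : |2 + h| ≤ 2 + c₁ := by
    calc |2+h| ≤ |(2:ℝ)| + |h| := abs_add_le _ _
      _ ≤ 2 + c₁ := by
        rw [abs_two]
        have : c₁ * t^(2-μ) ≤ c₁ := mul_le_of_le_one_right hc₁.le hX1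
        have := hh.trans this
        linarith
  have tri : |(1 - G^2) - h*G/t + (h - G/t)*(2+h)|
      ≤ |1 - G^2| + |h*G/t| + |h - G/t| * |2+h| := by
    calc |(1 - G^2) - h*G/t + (h - G/t)*(2+h)|
        ≤ |(1 - G^2) - h*G/t| + |(h - G/t)*(2+h)| := abs_add_le _ _
      _ ≤ |1 - G^2| + |h*G/t| + |h - G/t| * |2+h| := by
          rw [abs_mul]
          have := abs_sub (1 - G^2) (h*G/t)
          linarith
  have t34 : |h - G/t| * |2+h| ≤ (c₁ * t^(2-μ) + (1+c₂) * t⁻¹) * (2 + c₁) :=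
    mul_le_mul t3 t4 (abs_nonneg _) (by positivity)
  have key : (c₂*(2+c₂)+c₁*(1+c₂)) * t^(1-μ) ≤ (c₂*(2+c₂)+c₁*(1+c₂)) * t^(2-μ) :=
    mul_le_mul_of_nonneg_left hYX (by positivity)
  calc |1 - G^2 - h*G/t + (h - G/t)*(2+h)|
      ≤ |1 - G^2| + |h*G/t| + |h - G/t| * |2+h| := tri
    _ ≤ c₂*(2+c₂) * t^(1-μ) + c₁*(1+c₂) * t^(1-μ)
        + (c₁ * t^(2-μ) + (1+c₂) * t⁻¹) * (2 + c₁) := by linarith [t34]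
    _ = (c₂*(2+c₂)+c₁*(1+c₂)) * t^(1-μ) + c₁*(2+c₁) * t^(2-μ)
        + (1+c₂)*(2+c₁) * t⁻¹ := by ring
    _ ≤ (c₂*(2+c₂)+c₁*(1+c₂)) * t^(2-μ) + c₁*(2+c₁) * t^(2-μ)
        + (1+c₂)*(2+c₁) * t⁻¹ := by linarith [key]
    _ = (2*c₂ + c₂^2 + c₁*(1+c₂) + c₁*(2+c₁)) * t^(2-μ) + (1+c₂)*(2+c₁) * t⁻¹ := by ring
end

section
/- Let Ω ⊆ ℝ² be open and convex and let E ∈ C²(Ω) be such that the Hessian D²E(x,y) is positive definite at every point of Ω, and define Λ : Ω → ℝ² by Λ(x,y) = (x,y) + ∇E(x,y). Then Λ is a diffeomorphism of Ω onto its image G := Λ(Ω), and for every point (x₀,y₀) ∈ Ω and r > 0 with the open ball B_r(x₀,y₀) contained in Ω, the open ball of radius r centered at Λ(x₀,y₀) is contained in G. -/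
open Real Filter Set Topology

/-- The gradient of `E`. -/
noncomputable def gradE (E : ℝ × ℝ → ℝ) (p : ℝ × ℝ) : ℝ × ℝ := (pdx E p, pdy E p)

/-- The map `Λ = id + ∇E`. -/
noncomputable def LamE (E : ℝ × ℝ → ℝ) (p : ℝ × ℝ) : ℝ × ℝ := p + gradE E p

/-- The open Euclidean ball in `ℝ²`. -/
def eball (P : ℝ × ℝ) (r : ℝ) : Set (ℝ × ℝ) := {q | enorm2 (q - P) < r}

/-- Euclidean dot product on `ℝ²`. -/
noncomputable def dot2 (a b : ℝ × ℝ) : ℝ := a.1 * b.1 + a.2 * b.2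

lemma enorm2_nonneg (p : ℝ × ℝ) : 0 ≤ enorm2 p := Real.sqrt_nonneg _

lemma sq_enorm2 (p : ℝ × ℝ) : enorm2 p ^ 2 = p.1 ^ 2 + p.2 ^ 2 :=
  Real.sq_sqrt (by positivity)

lemma enorm2_pos {p : ℝ × ℝ} (h : p ≠ 0) : 0 < enorm2 p := by
  have h' : 0 < p.1 ^ 2 + p.2 ^ 2 := by
    by_contra hc
    push_neg at hc
    have h1 : p.1 = 0 := by nlinarith [sq_nonneg p.1, sq_nonneg p.2]
    have h2 : p.2 = 0 := by nlinarith [sq_nonneg p.1, sq_nonneg p.2]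
    exact h (Prod.ext h1 h2)
  exact Real.sqrt_pos.mpr h'

lemma enorm2_zero : enorm2 (0 : ℝ × ℝ) = 0 := by simp [enorm2]

lemma dot2_le (a b : ℝ × ℝ) : dot2 a b ≤ enorm2 a * enorm2 b := by
  have hab : 0 ≤ enorm2 a * enorm2 b := mul_nonneg (enorm2_nonneg a) (enorm2_nonneg b)
  have h1 : (dot2 a b) ^ 2 ≤ (enorm2 a * enorm2 b) ^ 2 := by
    rw [mul_pow, sq_enorm2, sq_enorm2, dot2]
    nlinarith [sq_nonneg (a.1 * b.2 - a.2 * b.1)]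
  calc dot2 a b ≤ |dot2 a b| := le_abs_self _
    _ = Real.sqrt ((dot2 a b) ^ 2) := (Real.sqrt_sq_eq_abs _).symm
    _ ≤ Real.sqrt ((enorm2 a * enorm2 b) ^ 2) := Real.sqrt_le_sqrt h1
    _ = enorm2 a * enorm2 b := Real.sqrt_sq hab

lemma enorm2_add_le (a b : ℝ × ℝ) : enorm2 (a + b) ≤ enorm2 a + enorm2 b := by
  have hab : 0 ≤ enorm2 a + enorm2 b := add_nonneg (enorm2_nonneg a) (enorm2_nonneg b)
  have h1 : (a + b).1 ^ 2 + (a + b).2 ^ 2 ≤ (enorm2 a + enorm2 b) ^ 2 := by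
    have hcs := dot2_le a b
    have ha := sq_enorm2 a
    have hb := sq_enorm2 b
    simp only [Prod.fst_add, Prod.snd_add, dot2] at *
    nlinarith
  calc enorm2 (a + b) = Real.sqrt ((a + b).1 ^ 2 + (a + b).2 ^ 2) := rfl
    _ ≤ Real.sqrt ((enorm2 a + enorm2 b) ^ 2) := Real.sqrt_le_sqrt h1
    _ = enorm2 a + enorm2 b := Real.sqrt_sq hab

lemma enorm2_smul (t : ℝ) (p : ℝ × ℝ) : enorm2 (t • p) = |t| * enorm2 p := by
  simp only [enorm2, Prod.smul_fst, Prod.smul_snd, smul_eq_mul, mul_pow]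
  rw [← mul_add, Real.sqrt_mul (sq_nonneg t), Real.sqrt_sq_eq_abs]

lemma norm_le_enorm2 (p : ℝ × ℝ) : ‖p‖ ≤ enorm2 p := by
  rw [Prod.norm_def]
  apply max_le <;> rw [Real.norm_eq_abs, ← Real.sqrt_sq_eq_abs] <;>
    exact Real.sqrt_le_sqrt (by nlinarith [sq_nonneg p.1, sq_nonneg p.2])

lemma continuous_enorm2 : Continuous enorm2 :=
  (((continuous_fst.pow 2).add (continuous_snd.pow 2))).sqrt

lemma convex_eball' (P : ℝ × ℝ) (r : ℝ) : Convex ℝ (eball P r) := by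
  intro x hx y hy a b ha hb hab
  simp only [eball, mem_setOf_eq] at *
  have hP : a • P + b • P = P := by rw [← add_smul, hab, one_smul]
  have hre : a • x + b • y - P = a • (x - P) + b • (y - P) := by
    rw [smul_sub, smul_sub]
    conv_lhs => rw [← hP]
    abel
  rw [hre]
  have h2 : enorm2 (a • (x - P) + b • (y - P)) ≤ a * enorm2 (x - P) + b * enorm2 (y - P) := by
    calc enorm2 (a • (x - P) + b • (y - P)) ≤ enorm2 (a • (x - P)) + enorm2 (b • (y - P)) :=
          enorm2_add_le _ _
      _ = a * enorm2 (x - P) + b * enorm2 (y - P) := by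
          rw [enorm2_smul, enorm2_smul, abs_of_nonneg ha, abs_of_nonneg hb]
  rcases ha.lt_or_eq with h | h
  · have h3 : a * r + b * r = r := by rw [← add_mul, hab, one_mul]
    have h4 := mul_lt_mul_of_pos_left hx h
    have h5 := mul_le_mul_of_nonneg_left hy.le hb
    linarith
  · have hb1 : b = 1 := by linarith
    rw [← h, hb1] at h2 ⊢
    simp only [zero_smul, one_smul, zero_add, zero_mul, one_mul] at h2 ⊢
    linarith

lemma clm_apply_pair (L : (ℝ × ℝ) →L[ℝ] ℝ) (v : ℝ × ℝ) :
    L v = v.1 * L (1, 0) + v.2 * L (0, 1) := by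
  have hv : v = v.1 • ((1 : ℝ), (0 : ℝ)) + v.2 • ((0 : ℝ), (1 : ℝ)) := by
    simp [Prod.ext_iff]
  conv_lhs => rw [hv]
  rw [map_add, map_smul, map_smul, smul_eq_mul, smul_eq_mul]

/-- if `E ∈ C²(Ω)` has positive definite Hessian on the open convex set
`Ω`, then `Λ = id + ∇E` is a diffeomorphism onto its image `G = Λ(Ω)`, and each
Euclidean ball `B_r(P) ⊆ Ω` yields `B_r(Λ(P)) ⊆ G`. -/
theorem gradient_map_diffeomorphism_ball
    (Ω : Set (ℝ × ℝ)) (hΩ : IsOpen Ω) (hconv : Convex ℝ Ω)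
    (E : ℝ × ℝ → ℝ) (hE : ContDiffOn ℝ 2 E Ω)
    (hpos : ∀ p ∈ Ω, ∀ v : ℝ × ℝ, v ≠ 0 →
      0 < fderiv ℝ (fun q => fderiv ℝ E q v) p v) :
    Set.InjOn (LamE E) Ω ∧
    IsOpen (LamE E '' Ω) ∧
    ContDiffOn ℝ 1 (LamE E) Ω ∧
    (∃ Linv : ℝ × ℝ → ℝ × ℝ,
      ContDiffOn ℝ 1 Linv (LamE E '' Ω) ∧
      (∀ p ∈ Ω, Linv (LamE E p) = p) ∧
      (∀ q ∈ LamE E '' Ω, LamE E (Linv q) = q)) ∧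
    ∀ P ∈ Ω, ∀ r : ℝ, 0 < r → eball P r ⊆ Ω →
      eball (LamE E P) r ⊆ LamE E '' Ω := by
  -- step 0: the fderiv of E is C¹ on Ω
  have hE' : ContDiffOn ℝ (1 + 1) E Ω := by
    rw [one_add_one_eq_two]; exact hE
  have hE1 : ContDiffOn ℝ 1 (fderiv ℝ E) Ω :=
    ((contDiffOn_succ_iff_fderiv_of_isOpen hΩ).mp hE').2.2
  have hdiffE : ∀ x ∈ Ω, DifferentiableAt ℝ (fderiv ℝ E) x := fun x hx =>
    ((hE1.differentiableOn one_ne_zero).differentiableAt (hΩ.mem_nhds hx))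
  have hFv : ∀ (v : ℝ × ℝ), ∀ x ∈ Ω, DifferentiableAt ℝ (fun y => fderiv ℝ E y v) x :=
    fun v x hx => (hdiffE x hx).clm_apply (differentiableAt_const v)
  -- step 1: strict monotonicity of the gradient along segments
  have key : ∀ p ∈ Ω, ∀ q ∈ Ω, p ≠ q →
      fderiv ℝ E q (p - q) < fderiv ℝ E p (p - q) := by
    intro p hp q hq hne
    set v := p - q with hv
    have hvne : v ≠ 0 := sub_ne_zero.mpr hne
    set γ : ℝ → ℝ × ℝ := fun t => q + t • v with hγ
    have hγmem : ∀ t ∈ Icc (0 : ℝ) 1, γ t ∈ Ω := by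
      intro t ht
      have hmem := hconv hq hp (by linarith [ht.2] : (0:ℝ) ≤ 1 - t) ht.1 (by ring)
      have hrw : γ t = (1 - t) • q + t • p := by
        simp only [hγ, hv, smul_sub, sub_smul, one_smul]
        abel
      rw [hrw]; exact hmem
    set h : ℝ → ℝ := fun t => fderiv ℝ E (γ t) v with hh
    have hder : ∀ t ∈ Icc (0 : ℝ) 1,
        HasDerivAt h (fderiv ℝ (fun y => fderiv ℝ E y v) (γ t) v) t := by
      intro t ht
      have hγd : HasDerivAt γ v t := by
        simpa [hγ] using ((hasDerivAt_id t).smul_const v).const_add q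
      have hF : HasFDerivAt (fun y => fderiv ℝ E y v)
          (fderiv ℝ (fun y => fderiv ℝ E y v) (γ t)) (γ t) :=
        (hFv v _ (hγmem t ht)).hasFDerivAt
      exact hF.comp_hasDerivAt t hγd
    have hmono : StrictMonoOn h (Icc 0 1) := by
      apply strictMonoOn_of_deriv_pos (convex_Icc 0 1)
      · exact fun t ht => (hder t ht).continuousAt.continuousWithinAt
      · intro t ht
        rw [interior_Icc] at ht
        rw [(hder t (Ioo_subset_Icc_self ht)).deriv]
        exact hpos (γ t) (hγmem t (Ioo_subset_Icc_self ht)) v hvne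
    have hlt := hmono (left_mem_Icc.mpr zero_le_one) (right_mem_Icc.mpr zero_le_one) zero_lt_one
    have h0 : γ 0 = q := by simp [hγ]
    have h1 : γ 1 = p := by simp [hγ, hv]
    simpa [hh, h0, h1] using hlt
  -- step 2: expansion property
  have hgap : ∀ p q : ℝ × ℝ, dot2 (gradE E p - gradE E q) (p - q)
      = fderiv ℝ E p (p - q) - fderiv ℝ E q (p - q) := by
    intro p q
    rw [clm_apply_pair (fderiv ℝ E p), clm_apply_pair (fderiv ℝ E q)]
    simp only [dot2, gradE, pdx, pdy, Prod.fst_sub, Prod.snd_sub]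
    ring
  have hexp : ∀ p ∈ Ω, ∀ q ∈ Ω, enorm2 (p - q) ≤ enorm2 (LamE E p - LamE E q) := by
    intro p hp q hq
    rcases eq_or_ne p q with rfl | hne
    · simp
    · have hkey := key p hp q hq hne
      have hΛd : LamE E p - LamE E q = (p - q) + (gradE E p - gradE E q) := by
        simp only [LamE]; abel
      have hself : dot2 (p - q) (p - q) = enorm2 (p - q) ^ 2 := by
        rw [sq_enorm2]; simp only [dot2]; ring
      have hsplit : dot2 (LamE E p - LamE E q) (p - q)
          = dot2 (p - q) (p - q) + dot2 (gradE E p - gradE E q) (p - q) := by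
        rw [hΛd]; simp only [dot2, Prod.fst_add, Prod.snd_add]; ring
      have hD : 0 ≤ dot2 (gradE E p - gradE E q) (p - q) := by
        rw [hgap p q]; linarith
      have hdotge : enorm2 (p - q) ^ 2 ≤ dot2 (LamE E p - LamE E q) (p - q) := by
        rw [hsplit, hself]; linarith
      have hCS := dot2_le (LamE E p - LamE E q) (p - q)
      have hpos2 : 0 < enorm2 (p - q) := enorm2_pos (sub_ne_zero.mpr hne)
      nlinarith [enorm2_nonneg (LamE E p - LamE E q)]
  -- injectivity
  have hinj : Set.InjOn (LamE E) Ω := by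
    intro p hp q hq he
    by_contra hne
    have h1 := hexp p hp q hq
    rw [he, sub_self, enorm2_zero] at h1
    exact absurd h1 (not_le.mpr (enorm2_pos (sub_ne_zero.mpr hne)))
  -- C¹ smoothness of Λ
  have hgradC : ContDiffOn ℝ 1 (gradE E) Ω := by
    unfold gradE pdx pdy
    exact (hE1.clm_apply contDiffOn_const).prodMk (hE1.clm_apply contDiffOn_const)
  have hΛC : ContDiffOn ℝ 1 (LamE E) Ω := by
    unfold LamE
    exact contDiffOn_id.add hgradC
  -- invertible derivative at every point
  have hM : ∀ p ∈ Ω, ∃ Φ : (ℝ × ℝ) ≃L[ℝ] (ℝ × ℝ),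
      HasFDerivAt (LamE E) (Φ : (ℝ × ℝ) →L[ℝ] (ℝ × ℝ)) p := by
    intro p hp
    have hA1d : DifferentiableAt ℝ (fun x => pdx E x) p := by
      unfold pdx; exact (hdiffE p hp).clm_apply (differentiableAt_const _)
    have hA2d : DifferentiableAt ℝ (fun x => pdy E x) p := by
      unfold pdy; exact (hdiffE p hp).clm_apply (differentiableAt_const _)
    set A1 := fderiv ℝ (fun x => pdx E x) p with hA1
    set A2 := fderiv ℝ (fun x => pdy E x) p with hA2
    have hgd : HasFDerivAt (gradE E) (A1.prod A2) p := by
      unfold gradE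
      exact hA1d.hasFDerivAt.prodMk hA2d.hasFDerivAt
    set M := ContinuousLinearMap.id ℝ (ℝ × ℝ) + A1.prod A2 with hMdef
    have hMd : HasFDerivAt (LamE E) M p := by
      unfold LamE
      exact (hasFDerivAt_id p).add hgd
    have hMpos : ∀ w : ℝ × ℝ, w ≠ 0 → 0 < dot2 (M w) w := by
      intro w hw
      have hcongr : (fun x => fderiv ℝ E x w) = fun x => w.1 * pdx E x + w.2 * pdy E x := by
        funext x
        rw [clm_apply_pair (fderiv ℝ E x)]; rfl
      have hsum : HasFDerivAt (fun x => w.1 * pdx E x + w.2 * pdy E x)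
          (w.1 • A1 + w.2 • A2) p :=
        (hA1d.hasFDerivAt.const_mul w.1).add (hA2d.hasFDerivAt.const_mul w.2)
      have hfd : fderiv ℝ (fun x => fderiv ℝ E x w) p = w.1 • A1 + w.2 • A2 := by
        rw [hcongr]; exact hsum.fderiv
      have hp2 := hpos p hp w hw
      rw [hfd] at hp2
      simp only [ContinuousLinearMap.add_apply, ContinuousLinearMap.coe_smul',
        Pi.smul_apply, smul_eq_mul] at hp2
      have hMw : dot2 (M w) w = dot2 w w + (w.1 * A1 w + w.2 * A2 w) := by
        simp only [hMdef, dot2, ContinuousLinearMap.add_apply,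
          ContinuousLinearMap.coe_id', id_eq, ContinuousLinearMap.prod_apply,
          Prod.fst_add, Prod.snd_add]
        ring
      have hww : 0 ≤ dot2 w w := by
        simp only [dot2]; nlinarith [sq_nonneg w.1, sq_nonneg w.2]
      rw [hMw]; linarith
    have hMinj : Function.Injective M := by
      intro a b hab
      by_contra hne
      have hzero : M (a - b) = 0 := by rw [map_sub, hab, sub_self]
      have h0 := hMpos (a - b) (sub_ne_zero.mpr hne)
      rw [hzero] at h0
      simp [dot2] at h0
    have hsurj : Function.Surjective M := LinearMap.injective_iff_surjective.mp hMinj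
    set ψ := LinearEquiv.ofBijective (M : (ℝ × ℝ) →ₗ[ℝ] (ℝ × ℝ)) ⟨hMinj, hsurj⟩ with hψ
    refine ⟨ψ.toContinuousLinearEquiv, ?_⟩
    have hco : (ψ.toContinuousLinearEquiv : (ℝ × ℝ) →L[ℝ] (ℝ × ℝ)) = M :=
      ContinuousLinearMap.coe_injective rfl
    rw [hco]
    exact hMd
  -- open mapping property
  have hmap : ∀ s, s ⊆ Ω → IsOpen s → IsOpen (LamE E '' s) := by
    intro s hsΩ hs
    rw [isOpen_iff_mem_nhds]
    rintro q ⟨p, hp, rfl⟩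
    obtain ⟨Φ, hΦ⟩ := hM p (hsΩ hp)
    have hstrict : HasStrictFDerivAt (LamE E) (Φ : (ℝ × ℝ) →L[ℝ] (ℝ × ℝ)) p :=
      (hΛC.contDiffAt (hΩ.mem_nhds (hsΩ hp))).hasStrictFDerivAt' hΦ one_ne_zero
    rw [← hstrict.map_nhds_eq_of_equiv, mem_map]
    exact mem_of_superset (hs.mem_nhds hp) (subset_preimage_image _ _)
  have hopen : IsOpen (LamE E '' Ω) := hmap Ω subset_rfl hΩ
  -- the global inverse
  have hLinvMem : ∀ q ∈ LamE E '' Ω, Function.invFunOn (LamE E) Ω q ∈ Ω := by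
    rintro q ⟨p, hp, rfl⟩
    exact Function.invFunOn_mem ⟨p, hp, rfl⟩
  have hright : ∀ q ∈ LamE E '' Ω, LamE E (Function.invFunOn (LamE E) Ω q) = q := by
    rintro q ⟨p, hp, rfl⟩
    exact Function.invFunOn_eq ⟨p, hp, rfl⟩
  have hleft : ∀ p ∈ Ω, Function.invFunOn (LamE E) Ω (LamE E p) = p := fun p hp =>
    hinj (hLinvMem _ ⟨p, hp, rfl⟩) hp (hright _ ⟨p, hp, rfl⟩)
  have hLinvC : ContDiffOn ℝ 1 (Function.invFunOn (LamE E) Ω) (LamE E '' Ω) := by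
    rintro q ⟨p, hp, rfl⟩
    obtain ⟨Φ, hΦ⟩ := hM p hp
    have hCAt : ContDiffAt ℝ 1 (LamE E) p := hΛC.contDiffAt (hΩ.mem_nhds hp)
    have hstrict : HasStrictFDerivAt (LamE E) (Φ : (ℝ × ℝ) →L[ℝ] (ℝ × ℝ)) p :=
      hCAt.hasStrictFDerivAt' hΦ one_ne_zero
    have hg : ContDiffAt ℝ 1 (hstrict.localInverse (LamE E) Φ p) (LamE E p) :=
      hCAt.to_localInverse hΦ one_ne_zero
    have hrinv := hstrict.eventually_right_inverse
    have htend := hstrict.localInverse_tendsto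
    have hmemΩ : ∀ᶠ y in 𝓝 (LamE E p), hstrict.localInverse (LamE E) Φ p y ∈ Ω :=
      htend (hΩ.mem_nhds hp)
    have heq : ∀ᶠ y in 𝓝[LamE E '' Ω] (LamE E p),
        Function.invFunOn (LamE E) Ω y = hstrict.localInverse (LamE E) Φ p y := by
      filter_upwards [(hrinv.and hmemΩ).filter_mono nhdsWithin_le_nhds,
        self_mem_nhdsWithin] with y hy hyim
      exact hinj (hLinvMem y hyim) hy.2 ((hright y hyim).trans hy.1.symm)
    exact (hg.contDiffWithinAt).congr_of_eventuallyEq heq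
      (by rw [hleft p hp, hstrict.localInverse_apply_image])
  refine ⟨hinj, hopen, hΛC, ⟨Function.invFunOn (LamE E) Ω, hLinvC, hleft, hright⟩, ?_⟩
  -- the ball property
  intro P hP r hr hball q hq
  have hq' : enorm2 (q - LamE E P) < r := hq
  set d := enorm2 (q - LamE E P) with hd
  have hd0 : 0 ≤ d := enorm2_nonneg _
  set ρ := (d + r) / 2 with hρ
  have hdρ : d < ρ := by rw [hρ]; linarith
  have hρr : ρ < r := by rw [hρ]; linarith
  have hρ0 : 0 < ρ := by rw [hρ]; linarith
  set K := {x : ℝ × ℝ | enorm2 (x - P) ≤ ρ} with hK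
  have hKΩ : K ⊆ Ω := fun x hx => hball (lt_of_le_of_lt hx hρr)
  have hKc : IsCompact K := by
    apply Metric.isCompact_of_isClosed_isBounded
    · exact isClosed_le (continuous_enorm2.comp (continuous_id.sub continuous_const))
        continuous_const
    · refine (Metric.isBounded_closedBall (x := P) (r := ρ)).subset fun x hx => ?_
      rw [Metric.mem_closedBall, dist_eq_norm]
      exact le_trans (norm_le_enorm2 _) hx
  have hCc : IsCompact (LamE E '' K) := hKc.image_of_continuousOn (hΛC.continuousOn.mono hKΩ)
  have hCcl : IsClosed (LamE E '' K) := hCc.isClosed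
  have hballρΩ : eball P ρ ⊆ Ω := fun x hx => hball (lt_trans hx hρr)
  have hUo : IsOpen (LamE E '' eball P ρ) := by
    refine hmap _ hballρΩ ?_
    exact isOpen_lt (continuous_enorm2.comp (continuous_id.sub continuous_const))
      continuous_const
  have hsubU : ∀ y ∈ eball (LamE E P) ρ, y ∈ LamE E '' K → y ∈ LamE E '' eball P ρ := by
    rintro y hy ⟨x, hx, rfl⟩
    exact ⟨x, lt_of_le_of_lt (hexp x (hKΩ hx) P hP) hy, rfl⟩
  have hpc : IsPreconnected (eball (LamE E P) ρ) := (convex_eball' (LamE E P) ρ).isPreconnected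
  by_contra hqnot
  have hqball : q ∈ eball (LamE E P) ρ := hdρ
  have hqC : q ∉ LamE E '' K := by
    intro hc
    exact hqnot (image_mono (f := LamE E) hballρΩ (hsubU q hqball hc))
  have hcover : eball (LamE E P) ρ ⊆ LamE E '' eball P ρ ∪ (LamE E '' K)ᶜ := by
    intro y hy
    by_cases hyc : y ∈ LamE E '' K
    · exact Or.inl (hsubU y hy hyc)
    · exact Or.inr hyc
  have hne1 : (eball (LamE E P) ρ ∩ LamE E '' eball P ρ).Nonempty := by
    refine ⟨LamE E P, ?_, ⟨P, ?_, rfl⟩⟩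
    · show enorm2 (LamE E P - LamE E P) < ρ
      rw [sub_self, enorm2_zero]; exact hρ0
    · show enorm2 (P - P) < ρ
      rw [sub_self, enorm2_zero]; exact hρ0
  have hne2 : (eball (LamE E P) ρ ∩ (LamE E '' K)ᶜ).Nonempty := ⟨q, hqball, hqC⟩
  obtain ⟨z, hz⟩ := hpc _ _ hUo hCcl.isOpen_compl hcover hne1 hne2
  have hbK : eball P ρ ⊆ K := fun x (hx : enorm2 (x - P) < ρ) => mem_setOf.mpr (le_of_lt hx)
  exact hz.2.2 (image_mono (f := LamE E) hbK hz.2.1)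
end
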